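/- Every nontrivial normal subgroup of the lamplighter group L₁ = (ℤ/pℤ) ≀ ℤ intersects the base group A₁ = ⊕_ℤ(ℤ/pℤ) in a subgroup of finite index in A₁; in particular every nontrivial normal subgroup of L₁ is infinite. -/

import Mathlib

open Finsupp Multiplicative

/-- The base group of the lamplighter group `L_n = (ℤ/pℤ)^n ≀ ℤ`: `⊕_ℤ (ℤ/pℤ)^n`. -/
abbrev LampBase (p n : ℕ) := ℤ →₀ (Fin n → ZMod p)

/-- The shift `x^s` on the base group. -/
def lampShift (p n : ℕ) (s : ℤ) : LampBase p n ≃+ LampBase p n :=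
  Finsupp.domCongr (Equiv.addRight s)

/-- The shift action of `ℤ` on the (multiplicative) base group. -/
noncomputable def lampAct (p n : ℕ) :
    Multiplicative ℤ →* MulAut (Multiplicative (LampBase p n)) where
  toFun s := AddEquiv.toMultiplicative (lampShift p n s.toAdd)
  map_one' := by
    ext w
    simp [lampShift, Finsupp.domCongr_apply]
    rfl
  map_mul' s t := by
    ext w
    simp [lampShift, Finsupp.domCongr_apply, MulAut.mul_def, MulEquiv.trans_apply]
    try simp [Finsupp.equivMapDomain_apply, Equiv.Perm.mul_def]
    try ring_nf

/-- The lamplighter group `L_n = (ℤ/pℤ)^n ≀ ℤ`, realized as the semidirect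
product of the base group `⊕_ℤ (ℤ/pℤ)^n` with `ℤ` acting by the shift. -/
abbrev Lamp (p n : ℕ) :=
  SemidirectProduct (Multiplicative (LampBase p n)) (Multiplicative ℤ) (lampAct p n)

/-!
Let `W` be the intersection of a normal subgroup `V` with the base group `A = ℤ →₀ 𝔽_p`.
Conjugation by the generator of `ℤ` is the shift, so `W` is a shift-invariant subspace, i.e. an
ideal of `𝔽_p[t, t⁻¹] ≅ A`. It is nonzero: for `v ∈ V` with nonzero `ℤ`-component `s`, the
commutator of a lamp `x` with `v` is `x - tˢx ≠ 0`. A nonzero `w ∈ W` supported on `[a, b]` has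
unit coefficients at `a` and `b`, so subtracting shifted multiples of `w` moves the support of any
element of `A` into `[a, b)`. Hence `A / W` is finite, and `W`, having finite index in the infinite
group `A`, is infinite.
-/

open Set

theorem Int.eq_univ_of_Ico_subset {S : Set ℤ} {a b : ℤ} (h₀ : Ico a b ⊆ S)
    (hup : ∀ k, Ico (k - (b - a)) k ⊆ S → k ∈ S)
    (hdown : ∀ k, Ioc k (k + (b - a)) ⊆ S → k ∈ S) : S = univ := by
  have grow : ∀ n : ℕ, Ico (a - n) (b + n) ⊆ S := by
    intro n
    induction n with
    | zero => simpa using h₀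
    | succ n ih =>
      have htop : b + n ∈ S := hup _ fun k hk => ih (by simp only [mem_Ico] at hk ⊢; omega)
      have hbot : a - n - 1 ∈ S := hdown _ fun k hk => by
        by_cases hk' : k = b + n
        · exact hk' ▸ htop
        · exact ih (by simp only [mem_Ioc, mem_Ico] at hk ⊢; omega)
      intro k hk
      by_cases hk₁ : k = b + n
      · exact hk₁ ▸ htop
      by_cases hk₂ : k = a - n - 1
      · exact hk₂ ▸ hbot
      exact ih (by simp only [mem_Ico] at hk ⊢; push_cast at hk; omega)
  refine eq_univ_of_forall fun k => grow ((a - k).toNat + (k - b + 1).toNat) ?_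
  simp only [mem_Ico]; omega

section ShiftInvariant

variable {R : Type*} [CommRing R]

theorem Finsupp.domCongr_addRight_smul_sub_single_mem_supported {w : ℤ →₀ R} {a b : ℤ}
    (hw : w ∈ supported R R (Icc a b)) {i : ℤ} {c : R} (hc : c * w i = 1) (k : ℤ) :
    Finsupp.domCongr (Equiv.addRight (k - i)) (c • w) - single k 1 ∈
      supported R R (Icc (a + (k - i)) (b + (k - i)) \ {k}) := by
  rw [mem_supported'] at hw ⊢
  intro j hj
  by_cases hjk : j = k
  · subst hjk
    simp [domCongr_apply, hc]
  · have hw' : w (j + (i - k)) = 0 := hw _ fun h => hj ⟨by simp only [mem_Icc] at h ⊢; omega, hjk⟩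
    simp [domCongr_apply, Ne.symm hjk, hw']

theorem Finsupp.sup_supported_Ico_eq_top {W : Submodule R (ℤ →₀ R)}
    (hW : ∀ s, ∀ f ∈ W, Finsupp.domCongr (Equiv.addRight s) f ∈ W) {w : ℤ →₀ R} (hwW : w ∈ W)
    {a b : ℤ} (hw : w ∈ supported R R (Icc a b)) (ha : IsUnit (w a)) (hb : IsUnit (w b)) :
    W ⊔ supported R R (Ico a b) = ⊤ := by
  set U := W ⊔ supported R R (Ico a b)
  have supported_le {s : Set ℤ} (hs : ∀ k ∈ s, single k 1 ∈ U) : supported R R s ≤ U := by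
    rw [supported_eq_span_single, Submodule.span_le]
    rintro _ ⟨k, hk, rfl⟩
    exact hs k hk
  have step {k : ℤ} {v : ℤ →₀ R} {s : Set ℤ} (hv : v ∈ W) (hs : ∀ j ∈ s, single j 1 ∈ U)
      (hvs : v - single k 1 ∈ supported R R s) : single k 1 ∈ U := by
    rw [← sub_sub_cancel v (single k 1)]
    exact U.sub_mem (Submodule.mem_sup_left hv) (supported_le hs hvs)
  suffices h : {k | single k (1 : R) ∈ U} = univ by
    rw [eq_top_iff, ← supported_univ, ← h]
    exact supported_le fun k hk => hk
  -- modulo `W`, `single k 1` is a combination of the lamps at the `b - a` positions below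
  -- (resp. above) `k`: subtract a multiple of `w` shifted so that its top (resp. bottom) is at `k`
  refine Int.eq_univ_of_Ico_subset (a := a) (b := b) (fun k hk => ?_) (fun k hk => ?_)
    (fun k hk => ?_)
  · exact Submodule.mem_sup_right (single_mem_supported R 1 hk)
  · obtain ⟨c, hc⟩ := hb.exists_left_inv
    refine step (hW _ _ (W.smul_mem c hwW)) hk (supported_mono (fun j hj => ?_)
      (domCongr_addRight_smul_sub_single_mem_supported hw hc k))
    simp only [mem_Ico, mem_sdiff, mem_Icc, mem_singleton_iff] at hj ⊢; omega
  · obtain ⟨c, hc⟩ := ha.exists_left_inv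
    refine step (hW _ _ (W.smul_mem c hwW)) hk (supported_mono (fun j hj => ?_)
      (domCongr_addRight_smul_sub_single_mem_supported hw hc k))
    simp only [mem_Ioc, mem_sdiff, mem_Icc, mem_singleton_iff] at hj ⊢; omega

theorem Finsupp.finite_quotient_of_domCongr_mem [Finite R] {W : Submodule R (ℤ →₀ R)}
    (hW : ∀ s, ∀ f ∈ W, Finsupp.domCongr (Equiv.addRight s) f ∈ W) {w : ℤ →₀ R} (hwW : w ∈ W)
    {a b : ℤ} (hw : w ∈ supported R R (Icc a b)) (ha : IsUnit (w a)) (hb : IsUnit (w b)) :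
    Finite ((ℤ →₀ R) ⧸ W) := by
  have hT : Finite (supported R R (Ico a b)) :=
    .of_equiv _ ((supportedEquivFinsupp (Ico a b)).toEquiv.trans equivFunOnFinite).symm
  have hmap := (Submodule.map_mkQ_eq_top _ _).mpr (sup_supported_Ico_eq_top hW hwW hw ha hb)
  refine .of_surjective (fun t : supported R R (Ico a b) => W.mkQ t) fun q => ?_
  obtain ⟨t, ht, rfl⟩ := (Submodule.mem_map (f := W.mkQ)).mp (hmap ▸ Submodule.mem_top (x := q))
  exact ⟨⟨t, ht⟩, rfl⟩

end ShiftInvariant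

namespace SemidirectProduct

variable {N G : Type*} [Group G]

open scoped commutatorElement

theorem map_mem_comap_inl [Group N] {φ : G →* MulAut N} (V : Subgroup (N ⋊[φ] G)) [V.Normal]
    {x : N} (hx : x ∈ V.comap inl) (g : G) : φ g x ∈ V.comap inl := by
  rw [Subgroup.mem_comap, inl_aut, map_inv]
  exact ‹V.Normal›.conj_mem _ hx _

theorem commutatorElement_inl [CommGroup N] {φ : G →* MulAut N} (x : N) (v : N ⋊[φ] G) :
    ⁅(inl x : N ⋊[φ] G), v⁆ = inl (x * (φ v.right x)⁻¹) := by
  ext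
  · simp [commutatorElement_def, mul_left, inv_left, mul_right_comm x v.left]
  · simp [commutatorElement_def]

theorem comap_inl_ne_bot [CommGroup N] {φ : G →* MulAut N} (hφ : Function.Injective φ)
    {V : Subgroup (N ⋊[φ] G)} [V.Normal] (hV : V ≠ ⊥) : V.comap inl ≠ ⊥ := by
  obtain ⟨v, hvV, hv⟩ := (V.bot_or_exists_ne_one).resolve_left hV
  refine fun h => ?_
  rw [Subgroup.eq_bot_iff_forall] at h
  by_cases hg : v.right = 1
  · have hvl : inl v.left = v := by
      conv_rhs => rw [← inl_left_mul_inr_right v, hg, map_one, mul_one]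
    apply hv
    rw [← hvl, h v.left (by rwa [Subgroup.mem_comap, hvl]), map_one]
  · obtain ⟨x, hx⟩ := DFunLike.ne_iff.mp ((map_ne_one_iff φ hφ).mpr hg)
    have hc := h (x * (φ v.right x)⁻¹) (by
      rw [Subgroup.mem_comap, ← commutatorElement_inl]
      exact V.mul_mem (‹V.Normal›.conj_mem v hvV _) (V.inv_mem hvV))
    exact hx (mul_inv_eq_one.mp hc).symm

end SemidirectProduct

theorem lampShift_single (p n : ℕ) (s k : ℤ) (e : Fin n → ZMod p) :
    lampShift p n s (single k e) = single (k + s) e := by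
  simp [lampShift, domCongr_apply]

theorem lampAct_injective (p n : ℕ) [NeZero n] [Nontrivial (ZMod p)] :
    Function.Injective (lampAct p n) := by
  refine (injective_iff_map_eq_one _).mpr fun s hs => ?_
  have h : lampShift p n s.toAdd (single 0 1) = single 0 1 :=
    congrArg toAdd (DFunLike.congr_fun hs (ofAdd (single 0 1)))
  rw [lampShift_single, zero_add] at h
  simpa using (single_left_inj one_ne_zero).mp h

theorem Finsupp.smul_eq_val_nsmul {α ι : Type*} [Unique ι] {p : ℕ} [NeZero p] (c : ι → ZMod p)
    (f : α →₀ (ι → ZMod p)) : c • f = (c default).val • f := by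
  ext k i
  simp [Unique.eq_default i]

theorem Pi.isUnit_of_ne_zero {ι K : Type*} [Unique ι] [DivisionRing K] {x : ι → K} (hx : x ≠ 0) :
    IsUnit x :=
  Pi.isUnit_iff.mpr fun i => isUnit_iff_ne_zero.mpr fun h =>
    hx (funext fun j => by rw [Subsingleton.elim j i, h, Pi.zero_apply])

theorem Finsupp.exists_mem_supported_Icc {R : Type*} [Semiring R] {w : ℤ →₀ R} (hw : w ≠ 0) :
    ∃ a b, w ∈ supported R R (Icc a b) ∧ w a ≠ 0 ∧ w b ≠ 0 := by
  have hs := support_nonempty_iff.mpr hw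
  refine ⟨w.support.min' hs, w.support.max' hs, fun k hk => ⟨w.support.min'_le k hk,
    w.support.le_max' k hk⟩, mem_support_iff.mp (w.support.min'_mem hs),
    mem_support_iff.mp (w.support.max'_mem hs)⟩

theorem Subgroup.infinite_of_finiteIndex {G : Type*} [Group G] [Infinite G] (H : Subgroup G)
    [H.FiniteIndex] : Infinite H := by
  by_contra hH
  have : Finite H := not_infinite_iff_finite.mp hH
  have := Finite.of_subgroup_quotient H
  exact not_finite G

noncomputable def lampSubmodule {p : ℕ} [NeZero p]
    (W : Subgroup (Multiplicative (LampBase p 1))) :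
    Submodule (Fin 1 → ZMod p) (LampBase p 1) where
  toAddSubmonoid := (Subgroup.toAddSubgroup' W).toAddSubmonoid
  smul_mem' c f hf := by
    rw [smul_eq_val_nsmul]
    exact nsmul_mem (show f ∈ Subgroup.toAddSubgroup' W from hf) _

/-- Every nontrivial normal subgroup of `L₁ = (ℤ/pℤ) ≀ ℤ` meets the base group
in a finite-index subgroup of the base group; in particular it is infinite. -/
theorem stmt_10 (p : ℕ) [Fact p.Prime]
    (V : Subgroup (Lamp p 1)) [V.Normal] (hV : V ≠ ⊥) :
    (Subgroup.comap (SemidirectProduct.inl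
        (φ := lampAct p 1)) V).FiniteIndex ∧
      (V : Set (Lamp p 1)).Infinite := by
  set W := V.comap (SemidirectProduct.inl (φ := lampAct p 1))
  obtain ⟨⟨w, hwW⟩, hw⟩ := W.ne_bot_iff_exists_ne_one.mp
    (SemidirectProduct.comap_inl_ne_bot (lampAct_injective p 1) hV)
  obtain ⟨a, b, hab, ha, hb⟩ := exists_mem_supported_Icc (R := Fin 1 → ZMod p) (w := w.toAdd)
    (by simpa using hw)
  have hshift (s : ℤ) (f : LampBase p 1) (hf : ofAdd f ∈ W) : ofAdd (lampShift p 1 s f) ∈ W :=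
    SemidirectProduct.map_mem_comap_inl V hf (ofAdd s)
  have hquot : Finite (LampBase p 1 ⧸ (lampSubmodule W).toAddSubgroup) :=
    finite_quotient_of_domCongr_mem hshift hwW hab (Pi.isUnit_of_ne_zero ha)
      (Pi.isUnit_of_ne_zero hb)
  have hW : W.FiniteIndex := (AddSubgroup.finiteIndex_toSubgroup_iff _).mpr
    (AddSubgroup.finiteIndex_of_finite_quotient (H := (lampSubmodule W).toAddSubgroup))
  refine ⟨hW, ?_⟩
  have := W.infinite_of_finiteIndex
  exact infinite_of_injective_forall_mem (f := fun u : W => SemidirectProduct.inl u.1)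
    (SemidirectProduct.inl_injective.comp Subtype.val_injective) fun u => u.2
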